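/- arXiv:math/0404148 — 2 statements merged into one kernel-verified Lean document; each statement's English description precedes it below -/
import Mathlib

section
/- Let I be an infinite set, U an ultrafilter on I, ⟨A_i : i ∈ I⟩ a family of nonempty sets, and k a natural number. Given a k-dimensional choice function on the ultraproduct A = ∏_{i∈I} A_i / U, the family F = { R ⊆ ᵏA : for every a ∈ ᵏA, T(R,a) ∈ U implies a ∈ R } contains the empty set and ᵏA, is closed under finite unions, and is closed under arbitrary intersections; hence F is the family of closed sets of a topology on ᵏA (the ultratopology induced by the choice function). -/
open Set

/-- The setoid on the product `∀ i, A i` identifying functions that agree on a set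
in the ultrafilter `U`; its quotient is the ultraproduct `∏ A i / U`. -/
def upSetoid {I : Type*} (U : Ultrafilter I) (A : I → Type*) : Setoid (∀ i, A i) where
  r f g := {i | f i = g i} ∈ U
  iseqv := by
    refine ⟨fun f => ?_, fun {f g} h => ?_, fun {f g h} hfg hgh => ?_⟩
    · exact Filter.univ_mem' fun i => rfl
    · exact Filter.mem_of_superset h fun i hi => (hi : f i = g i).symm
    · exact Filter.mem_of_superset (Filter.inter_mem hfg hgh) fun i hi =>
        (hi.1 : f i = g i).trans hi.2

/-- Given a "hat" map `c` assigning to each point of `Y` a representative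
in `∀ i, X i`, the set `T(R, a) = { i ∈ I : ∃ b ∈ R, b̂(i) = â(i) }`. -/
def tset {I : Type*} {X : I → Type*} {Y : Type*} (c : Y → ∀ i, X i)
    (R : Set Y) (a : Y) : Set I :=
  {i | ∃ b ∈ R, c b i = c a i}

/-- The ultratopology induced by the hat map `c`: closed sets are exactly the
`R` such that `T(R,a) ∈ U` implies `a ∈ R`. -/
def ultraTop {I : Type*} (U : Ultrafilter I) {X : I → Type*} {Y : Type*}
    (c : Y → ∀ i, X i) : TopologicalSpace Y :=
  TopologicalSpace.ofClosed {R | ∀ a, tset c R a ∈ U → a ∈ R}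
    (by
      intro a ha
      have h : tset c (∅ : Set Y) a = ∅ := by ext i; simp [tset]
      rw [h] at ha
      exact absurd ha (Filter.empty_notMem _))
    (by
      intro S hS a ha
      exact Set.mem_sInter.2 fun R hR => hS hR a
        (Filter.mem_of_superset ha fun i hi => by
          obtain ⟨b, hb, he⟩ := hi
          exact ⟨b, hb R hR, he⟩))
    (by
      intro R hR S hS a ha
      have h : tset c (R ∪ S) a = tset c R a ∪ tset c S a := by
        ext i; simp [tset, Set.mem_union, or_and_right, exists_or]
      rw [h] at ha
      rcases (Ultrafilter.union_mem_iff.1 ha) with h' | h'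
      · exact Or.inl (hR a h')
      · exact Or.inr (hS a h'))

section Ultratopology

open Topology

variable {I : Type*} {X : I → Type*} {Y : Type*} (c : Y → ∀ i, X i)

@[simp]
theorem tset_empty (a : Y) : tset c ∅ a = ∅ := by
  simp [tset]

theorem tset_union (R S : Set Y) (a : Y) : tset c (R ∪ S) a = tset c R a ∪ tset c S a := by
  ext i
  simp only [tset, mem_union, mem_ofPred_eq, or_and_right, exists_or]

theorem tset_mono {R S : Set Y} (h : R ⊆ S) (a : Y) : tset c R a ⊆ tset c S a :=
  fun _ ⟨b, hb, hi⟩ => ⟨b, h hb, hi⟩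

def ultraClosedSets (U : Ultrafilter I) (c : Y → ∀ i, X i) : Set (Set Y) :=
  {R | ∀ a, tset c R a ∈ U → a ∈ R}

variable {c} {U : Ultrafilter I}

theorem empty_mem_ultraClosedSets : ∅ ∈ ultraClosedSets U c := fun a ha => by
  rw [tset_empty] at ha
  exact absurd ha U.empty_notMem

theorem univ_mem_ultraClosedSets : univ ∈ ultraClosedSets U c := fun a _ => mem_univ a

theorem union_mem_ultraClosedSets {R S : Set Y} (hR : R ∈ ultraClosedSets U c)
    (hS : S ∈ ultraClosedSets U c) : R ∪ S ∈ ultraClosedSets U c := fun a ha => by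
  rw [tset_union, Ultrafilter.union_mem_iff] at ha
  exact ha.imp (hR a) (hS a)

theorem sInter_mem_ultraClosedSets {S : Set (Set Y)} (hS : S ⊆ ultraClosedSets U c) :
    ⋂₀ S ∈ ultraClosedSets U c := fun a ha =>
  mem_sInter.2 fun _ hR =>
    hS hR a (Filter.mem_of_superset ha (tset_mono c (sInter_subset_of_mem hR) a))

theorem isClosed_ultraTop_iff {R : Set Y} :
    IsClosed[ultraTop U c] R ↔ R ∈ ultraClosedSets U c := by
  rw [← @isOpen_compl_iff _ _ (ultraTop U c)]
  change Rᶜᶜ ∈ ultraClosedSets U c ↔ _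
  rw [compl_compl]

end Ultratopology

theorem ultratopology_exists_general {I : Type*} (U : Ultrafilter I)
    (A : I → Type*) (k : ℕ)
    (c : (Fin k → Quotient (upSetoid U A)) → ∀ i, Fin k → A i) :
    (∅ : Set (Fin k → Quotient (upSetoid U A))) ∈
        {R | ∀ a, tset c R a ∈ U → a ∈ R} ∧
    (Set.univ : Set (Fin k → Quotient (upSetoid U A))) ∈
        {R | ∀ a, tset c R a ∈ U → a ∈ R} ∧
    (∀ R ∈ {R | ∀ a, tset c R a ∈ U → a ∈ R},
      ∀ S ∈ {R | ∀ a, tset c R a ∈ U → a ∈ R},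
        R ∪ S ∈ {R | ∀ a, tset c R a ∈ U → a ∈ R}) ∧
    (∀ S ⊆ {R | ∀ a, tset c R a ∈ U → a ∈ R},
        ⋂₀ S ∈ {R | ∀ a, tset c R a ∈ U → a ∈ R}) ∧
    (∃ t : TopologicalSpace (Fin k → Quotient (upSetoid U A)),
        ∀ R, @IsClosed _ t R ↔ R ∈ {R | ∀ a, tset c R a ∈ U → a ∈ R}) :=
  ⟨empty_mem_ultraClosedSets, univ_mem_ultraClosedSets,
    fun _ hR _ hS => union_mem_ultraClosedSets hR hS, fun _ hS => sInter_mem_ultraClosedSets hS,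
    ultraTop U c, fun _ => isClosed_ultraTop_iff⟩

/-- Given a `k`-dimensional choice function on the ultraproduct
`A = ∏ᵢ Aᵢ / U` of an `I`-indexed family of nonempty sets (`I` infinite),
the family `F = { R ⊆ ᵏA : ∀ a, T(R,a) ∈ U → a ∈ R }` contains `∅` and `ᵏA`,
is closed under finite (binary) unions and arbitrary intersections; hence it is
the family of closed sets of a topology on `ᵏA`. -/
theorem ultratopology_exists {I : Type*} [Infinite I] (U : Ultrafilter I)
    (A : I → Type*) [∀ i, Nonempty (A i)] (k : ℕ)
    (c : (Fin k → Quotient (upSetoid U A)) → ∀ i, Fin k → A i)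
    (hc : ∀ a j, Quotient.mk (upSetoid U A) (fun i => c a i j) = a j) :
    (∅ : Set (Fin k → Quotient (upSetoid U A))) ∈
        {R | ∀ a, tset c R a ∈ U → a ∈ R} ∧
    (Set.univ : Set (Fin k → Quotient (upSetoid U A))) ∈
        {R | ∀ a, tset c R a ∈ U → a ∈ R} ∧
    (∀ R ∈ {R | ∀ a, tset c R a ∈ U → a ∈ R},
      ∀ S ∈ {R | ∀ a, tset c R a ∈ U → a ∈ R},
        R ∪ S ∈ {R | ∀ a, tset c R a ∈ U → a ∈ R}) ∧
    (∀ S ⊆ {R | ∀ a, tset c R a ∈ U → a ∈ R},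
        ⋂₀ S ∈ {R | ∀ a, tset c R a ∈ U → a ∈ R}) ∧
    (∃ t : TopologicalSpace (Fin k → Quotient (upSetoid U A)),
        ∀ R, @IsClosed _ t R ↔ R ∈ {R | ∀ a, tset c R a ∈ U → a ∈ R}) :=
  ultratopology_exists_general U A k c
end

section
/- Let I be a set, U an ultrafilter on I, and ⟨n_i : i ∈ I⟩ a family of finite nonempty sets such that the ultraproduct A = ∏_{i∈I} n_i / U is infinite. Let C be the ultratopology on A induced by any 1-dimensional choice function on A. Then the density of C is strictly smaller than |A|; that is, there exists a subset D ⊆ A which is dense in C and satisfies |D| < |A|. -/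
/-! If every dense set had size `κ = |A|`, we could choose points `F w` (`w < κ`) with `F w`
outside the closure of `{a₀} ∪ {F v | v < w}`. By the definition of the ultratopology, for
`U`-almost every `i` the value `c (F w) i` then differs from `c a₀ i` and from every earlier
`c (F v) i`. Hence the set `S i` of those `w` that are fresh at `i` is smaller than `n i`, and
`s ↦ [i ↦ |S i ∩ s|]` separates strictly nested subsets of `κ`. But `κ` carries a chain of more
than `κ` subsets (lexicographic cuts of the eventually-zero binary sequences of length `μ`, the
least cardinal with `2 ^ μ > κ`), so `|A| > κ`. -/

open Set

open Cardinal

universe u v w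

section LexChain

variable {ι β : Type*} [LinearOrder ι] [LinearOrder β] [OrderBot β]

def extendIic (i : ι) (f : Iic i → β) : ι → β := fun j => if h : j ≤ i then f ⟨j, h⟩ else ⊥

theorem exists_lt_toLex_extendIic_le [WellFoundedLT ι] {x y : ι → β} (h : toLex x < toLex y) :
    ∃ i, toLex x < toLex (extendIic i fun j => y j) ∧
      toLex (extendIic i fun j => y j) ≤ toLex y := by
  obtain ⟨i, hxy, hi⟩ := h
  refine ⟨i, ⟨i, fun j hj => ?_, ?_⟩, Pi.toLex_monotone fun j => ?_⟩
  · simp [extendIic, hj.le, hxy j hj]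
  · simpa [extendIic] using hi
  · unfold extendIic; split_ifs <;> simp

end LexChain

/-- The eventually-`false` sequences form a lexicographically dense set `E` with `#E ≤ #X`;
`x` is sent to the copy in `X` of the part of `E` below `x`. -/
theorem exists_strictMono_lex_bool_to_set {J X : Type u} [LinearOrder J] [WellFoundedLT J]
    (hX : ℵ₀ ≤ #X) (hJ : #J ≤ #X) (hIic : ∀ i : J, 2 ^ #(Iic i) ≤ #X) :
    ∃ g : Lex (J → Bool) → Set X, StrictMono g := by
  set E := range fun p : Σ i : J, (Iic i → Bool) => extendIic p.1 p.2
  have hE : #E ≤ #X := calc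
    #E ≤ #(Σ i : J, (Iic i → Bool)) := mk_range_le
    _ = sum fun i => 2 ^ #(Iic i) := by simp [mk_sigma]
    _ ≤ sum fun _ : J => #X := sum_le_sum _ _ hIic
    _ = #J * #X := sum_const' _ _
    _ ≤ #X * #X := mul_le_mul_left hJ _
    _ = #X := mul_eq_self hX
  obtain ⟨e⟩ := le_def _ _ |>.mp hE
  refine ⟨fun x => e '' {f : E | toLex f.1 ≤ x},
    e.injective.image_strictMono.comp fun x y hxy => ?_⟩
  obtain ⟨i, hxd, hdy⟩ := exists_lt_toLex_extendIic_le hxy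
  refine (ssubset_iff_of_subset fun f hf => le_trans hf hxy.le).2
    ⟨⟨_, ⟨i, fun j => y j⟩, rfl⟩, hdy, fun hdx => ?_⟩
  exact (lt_of_lt_of_le hxd hdx).false

theorem exists_strictMono_set_card_gt {X : Type u} (hX : ℵ₀ ≤ #X) :
    ∃ (T : Type u) (_ : LinearOrder T) (g : T → Set X), StrictMono g ∧ #X < #T := by
  obtain ⟨μ, hXμ, hμ_min⟩ :=
    wellFounded_lt.has_min {μ : Cardinal.{u} | #X < 2 ^ μ} ⟨_, cantor _⟩
  have hμ : ∀ ν < μ, 2 ^ ν ≤ #X := fun ν hν => not_lt.1 fun h => hμ_min ν h hν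
  have hμX : μ ≤ #X := not_lt.1 fun h => (hμ _ h).not_gt (cantor _)
  have hμ_inf : ℵ₀ ≤ μ := by
    by_contra! h
    exact (hXμ.trans (power_lt_aleph0 (natCast_lt_aleph0 (n := 2)) h)).not_ge hX
  obtain ⟨J, _, _, hJ, htype⟩ : ∃ (J : Type u) (_ : LinearOrder J) (_ : WellFoundedLT J),
      #J = μ ∧ (#J).ord = Ordinal.type (α := J) (· < ·) :=
    ⟨μ.ord.ToType, inferInstance, inferInstance, mk_ord_toType μ, by simp⟩
  obtain ⟨g, hg⟩ := exists_strictMono_lex_bool_to_set (J := J) hX (hJ.trans_le hμX)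
    fun i => hμ _ (hJ ▸ mk_Iic_lt i htype (hJ ▸ hμ_inf))
  refine ⟨Lex (J → Bool), inferInstance, g, hg, ?_⟩
  rw [← mk_congr toLex]
  simpa [hJ] using hXμ

theorem exists_ne_of_ssubset_of_encard_lt {I W : Type*} {U : Ultrafilter I} {X : I → Type*}
    [∀ i, Finite (X i)] (S : I → Set W) (hS : ∀ i, (S i).encard < ENat.card (X i))
    (hU : ∀ w, {i | w ∈ S i} ∈ U) :
    ∃ Φ : Set W → Quotient (upSetoid U X), ∀ ⦃s t⦄, s ⊂ t → Φ s ≠ Φ t := by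
  have hfin i : (S i).Finite := encard_lt_top_iff.1 ((hS i).trans ENat.card_lt_top_of_finite)
  have hcard i (s : Set W) : (S i ∩ s).ncard < Nat.card (X i) := by
    have := (encard_le_encard (inter_subset_left (t := s))).trans_lt (hS i)
    rwa [← ((hfin i).inter_of_left s).cast_ncard_eq, ENat.card_eq_coe_natCard,
      Nat.cast_lt] at this
  refine ⟨fun s => Quotient.mk _ fun i => (Finite.equivFin (X i)).symm ⟨_, hcard i s⟩,
    fun s t hst heq => ?_⟩
  obtain ⟨w, hwt, hws⟩ := exists_of_ssubset hst
  obtain ⟨i, hi_eq, hi_w⟩ :=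
    Filter.nonempty_of_mem (Filter.inter_mem (Quotient.exact heq) (hU w))
  have hlt : (S i ∩ s).ncard < (S i ∩ t).ncard :=
    ncard_lt_ncard (ssubset_of_subset_not_subset (inter_subset_inter_right _ hst.subset)
      fun h => hws (h ⟨hi_w, hwt⟩).2) ((hfin i).inter_of_left t)
  exact hlt.ne (congrArg Fin.val ((Finite.equivFin (X i)).symm.injective hi_eq))

theorem lift_mk_lt_lift_mk_quotient_upSetoid {I : Type u} {X : I → Type v} {W : Type w}
    {U : Ultrafilter I} [∀ i, Finite (X i)] (hW : ℵ₀ ≤ #W) (S : I → Set W)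
    (hS : ∀ i, (S i).encard < ENat.card (X i)) (hU : ∀ w, {i | w ∈ S i} ∈ U) :
    lift.{max u v} #W < lift.{w} #(Quotient (upSetoid U X)) := by
  obtain ⟨Φ, hΦ⟩ := exists_ne_of_ssubset_of_encard_lt S hS hU
  obtain ⟨T, _, g, hg, hWT⟩ := exists_strictMono_set_card_gt hW
  calc lift.{max u v} #W < lift.{max u v} #T := lift_strictMono hWT
    _ ≤ lift.{w} #(Quotient (upSetoid U X)) :=
      lift_mk_le_lift_mk_of_injective <|
        Function.Injective.of_lt_imp_ne fun s t hst => hΦ (hg hst)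

theorem WellFoundedLT.exists_forall_of_forall_Iio {W Y : Type*} [Preorder W] [WellFoundedLT W]
    (P : ∀ w : W, (Iio w → Y) → Y → Prop) (h : ∀ w G, ∃ y, P w G y) :
    ∃ F : W → Y, ∀ w, P w (fun v => F v) (F w) := by
  choose next hnext using h
  refine ⟨WellFoundedLT.fix fun w F => next w fun v => F v v.2, fun w => ?_⟩
  rw [WellFoundedLT.fix_eq]
  exact hnext _ _

theorem compl_tset_mem_of_notMem_closure {I Y : Type*} {U : Ultrafilter I} {X : I → Type*}
    {c : Y → ∀ i, X i} {R : Set Y} {a : Y} (ha : a ∉ @closure Y (ultraTop U c) R) :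
    (tset c R a)ᶜ ∈ U := by
  let := ultraTop U c
  refine Ultrafilter.compl_mem_iff_notMem.2 fun hR => ha ?_
  have hclosed : (closure R)ᶜᶜ ∈ {R' | ∀ b, tset c R' b ∈ U → b ∈ R'} :=
    (isClosed_closure (s := R)).isOpen_compl
  rw [compl_compl] at hclosed
  exact hclosed a (Filter.mem_of_superset hR fun i ⟨b, hb, he⟩ => ⟨b, subset_closure hb, he⟩)

theorem encard_lt_enatCard_of_forall_lt_ne {W X : Type*} [LinearOrder W] [Finite X] {S : Set W}
    {f : W → X} {x₀ : X} (h₀ : ∀ w ∈ S, f w ≠ x₀) (hlt : ∀ w ∈ S, ∀ v < w, f v ≠ f w) :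
    S.encard < ENat.card X := by
  have hinj : InjOn f S := by
    intro v hv w hw he
    by_contra hne
    rcases lt_or_gt_of_ne hne with h | h
    · exact hlt w hw v h he
    · exact hlt v hv w h he.symm
  rw [← hinj.encard_image]
  refine (toFinite _).encard_lt_card fun h => ?_
  obtain ⟨w, hw, he⟩ := h.symm ▸ mem_univ x₀
  exact h₀ w hw he

theorem density_lt_card_general {I : Type*} (U : Ultrafilter I)
    (n : I → Type*) [∀ i, Finite (n i)]
    (hA : Infinite (Quotient (upSetoid U n)))
    (c : Quotient (upSetoid U n) → ∀ i, n i) :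
    ∃ D : Set (Quotient (upSetoid U n)),
      @Dense _ (ultraTop U c) D ∧
      Cardinal.mk D < Cardinal.mk (Quotient (upSetoid U n)) := by
  let := ultraTop U c
  by_contra! hdense
  have hκ : ℵ₀ ≤ #(Quotient (upSetoid U n)) := infinite_iff.mp hA
  obtain ⟨a₀⟩ := hA.nonempty
  let W := (#(Quotient (upSetoid U n))).ord.ToType
  obtain ⟨F, hF⟩ : ∃ F : W → Quotient (upSetoid U n),
      ∀ w, F w ∉ closure (insert a₀ (range fun v : Iio w => F v)) := by
    refine WellFoundedLT.exists_forall_of_forall_Iio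
      (fun w G y => y ∉ closure (insert a₀ (range G))) fun w G => ?_
    have hsmall : #(insert a₀ (range G) : Set _) < #(Quotient (upSetoid U n)) :=
      mk_insert_le.trans_lt (add_one_lt_of_lt hκ (mk_range_le.trans_lt
        ((mk_Iio_lt w (by simp [W])).trans_eq (mk_ord_toType _))))
    by_contra! h
    exact (hdense _ h).not_gt hsmall
  let S i : Set W := {w | i ∈ (tset c (insert a₀ (range fun v : Iio w => F v)) (F w))ᶜ}
  have hS i : (S i).encard < ENat.card (n i) :=
    encard_lt_enatCard_of_forall_lt_ne (fun w hw he => hw ⟨a₀, mem_insert _ _, he.symm⟩)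
      fun w hw v hv he => hw ⟨F v, mem_insert_of_mem _ ⟨⟨v, hv⟩, rfl⟩, he⟩
  refine (lift_mk_lt_lift_mk_quotient_upSetoid (by simp [W, hκ]) S hS
    fun w => compl_tset_mem_of_notMem_closure (hF w)).ne ?_
  simp [W]

/-- If `A = ∏ᵢ nᵢ / U` is an infinite ultraproduct of finite
nonempty sets and `C` is the ultratopology induced by a 1-dimensional choice
function on `A`, then the density of `C` is strictly less than `|A|`: there is
a dense set `D ⊆ A` with `|D| < |A|`. -/
theorem density_lt_card {I : Type*} (U : Ultrafilter I)
    (n : I → Type*) [∀ i, Finite (n i)] [∀ i, Nonempty (n i)]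
    (hA : Infinite (Quotient (upSetoid U n)))
    (c : Quotient (upSetoid U n) → ∀ i, n i)
    (hc : ∀ a, Quotient.mk (upSetoid U n) (c a) = a) :
    ∃ D : Set (Quotient (upSetoid U n)),
      @Dense _ (ultraTop U c) D ∧
      Cardinal.mk D < Cardinal.mk (Quotient (upSetoid U n)) :=
  density_lt_card_general U n hA c
end
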